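/- For the pure-step scattering data ã(k) = (1/2)( ((k−ic)/(k+ic))^{1/4} + ((k+ic)/(k−ic))^{1/4} ) with c > 0, cut along [−ic, ic] and branch fixed by ã(k) → 1 as k → ∞, one has ã(k) ≠ 0 for all k in the upper half-plane off the cut, and ã(k) = (1/2)(2ic/(k−ic))^{1/4}(1 + O(√(k−ic))) as k → ic; in particular the constant h* in the expansion a(k) = (h*/2)(2ic/(k−ic))^{1/4}(1 + O(√((k−ic)/i))) equals 1. -/

import Mathlib

/-!
Put `w = (k - ic)/(k + ic)`. Off the cut `w` lies in the slit plane, so `u = w^{1/4}` has argument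
in `(-π/4, π/4)`, and `2ã = u + u⁻¹` has positive real part.

Near `ic` put `v = (k - ic)/(2ic)`, so that `w⁻¹ = 1 + v⁻¹` and `w⁻¹ v = 1 + v`. Since `1 + v⁻¹`
and `v` lie in opposite closed half-planes, their principal arguments add without wrapping around
and `(w⁻¹)^{1/4} v^{1/4} = (1 + v)^{1/4}`. Hence `2ã v^{1/4} - 1 = w^{1/4} v^{1/4} + ((1 + v)^{1/4} - 1)`,
where the first term is `O(|k - ic|^{1/2})` because `|w|, |v| = O(|k - ic|)`, and the second is
`O(|k - ic|)` because `z ↦ z^{1/4}` is differentiable at `1`.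
-/

open Complex Filter Asymptotics Topology

/-- The pure-step transmission-related coefficient
`ã(k) = (1/2)( ((k-ic)/(k+ic))^{1/4} + ((k+ic)/(k-ic))^{1/4} )`, with cut along `[-ic, ic]`
and branch fixed by `ã(k) → 1` as `k → ∞`. -/
noncomputable def aTilde (c : ℝ) (k : ℂ) : ℂ :=
  (1 / 2) * (((k - Complex.I * c) / (k + Complex.I * c)) ^ ((1 : ℂ) / 4)
    + ((k + Complex.I * c) / (k - Complex.I * c)) ^ ((1 : ℂ) / 4))

namespace Complex

lemma arg_nonpos_of_im_nonpos {z : ℂ} (hz : z ∈ slitPlane) (h : z.im ≤ 0) : z.arg ≤ 0 := by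
  rcases h.lt_or_eq with h | h
  · exact (arg_neg_iff.2 h).le
  · have hre : 0 < z.re := (mem_slitPlane_iff.1 hz).resolve_right (not_not.2 h)
    exact (arg_eq_zero_iff.2 ⟨hre.le, h⟩).le

lemma arg_add_arg_mem_Ioo_of_im_mul_im_nonpos {a b : ℂ} (ha : a ∈ slitPlane)
    (hb : b ∈ slitPlane) (h : a.im * b.im ≤ 0) :
    a.arg + b.arg ∈ Set.Ioo (-Real.pi) Real.pi := by
  have ha_lt := (arg_le_pi a).lt_of_ne (slitPlane_arg_ne_pi ha)
  have hb_lt := (arg_le_pi b).lt_of_ne (slitPlane_arg_ne_pi hb)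
  have ha_gt := neg_pi_lt_arg a
  have hb_gt := neg_pi_lt_arg b
  rcases lt_trichotomy a.im 0 with h₀ | h₀ | h₀
  · have := arg_neg_iff.2 h₀
    have := arg_nonneg_iff.2 (by nlinarith : 0 ≤ b.im)
    constructor <;> linarith
  · have := arg_nonneg_iff.2 h₀.ge
    have := arg_nonpos_of_im_nonpos ha h₀.le
    constructor <;> linarith
  · have := arg_nonneg_iff.2 h₀.le
    have := arg_nonpos_of_im_nonpos hb (by nlinarith)
    constructor <;> linarith

lemma mul_cpow_of_im_mul_im_nonpos {a b : ℂ} (ha : a ∈ slitPlane) (hb : b ∈ slitPlane)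
    (h : a.im * b.im ≤ 0) (x : ℂ) : (a * b) ^ x = a ^ x * b ^ x := by
  have ha₀ := slitPlane_ne_zero ha
  have hb₀ := slitPlane_ne_zero hb
  rw [cpow_def_of_ne_zero (mul_ne_zero ha₀ hb₀), cpow_def_of_ne_zero ha₀,
    cpow_def_of_ne_zero hb₀, ← exp_add, log_mul ha₀ hb₀
      (Set.Ioo_subset_Ioc_self (arg_add_arg_mem_Ioo_of_im_mul_im_nonpos ha hb h)), add_mul]

lemma inv_mem_slitPlane {z : ℂ} (hz : z ∈ slitPlane) : z⁻¹ ∈ slitPlane := by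
  have hn : 0 < normSq z := normSq_pos.2 (slitPlane_ne_zero hz)
  rw [mem_slitPlane_iff] at hz ⊢
  rw [inv_re, inv_im]
  rcases hz with h | h
  · exact Or.inl (div_pos h hn)
  · exact Or.inr (div_ne_zero (neg_ne_zero.2 h) hn.ne')

lemma one_add_mem_slitPlane {z : ℂ} (hz : z ∈ slitPlane) : 1 + z ∈ slitPlane := by
  rw [mem_slitPlane_iff] at hz ⊢
  simp only [add_re, one_re, add_im, one_im, zero_add]
  exact hz.imp (by intro h; linarith) id

lemma one_add_inv_cpow_mul_cpow {v : ℂ} (hv : v ∈ slitPlane) (x : ℂ) :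
    (1 + v⁻¹) ^ x * v ^ x = (1 + v) ^ x := by
  have hv₀ := slitPlane_ne_zero hv
  have him : (1 + v⁻¹).im * v.im ≤ 0 := by
    rw [add_im, one_im, zero_add, inv_im, neg_div, neg_mul, neg_nonpos, div_mul_eq_mul_div]
    exact div_nonneg (mul_self_nonneg _) (normSq_nonneg _)
  rw [← mul_cpow_of_im_mul_im_nonpos (one_add_mem_slitPlane (inv_mem_slitPlane hv)) hv him,
    add_mul, inv_mul_cancel₀ hv₀, one_mul, add_comm]

lemma re_cpow_pos {z : ℂ} (hz : z ∈ slitPlane) {x : ℝ} (hx : |x| ≤ 1 / 2) :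
    0 < (z ^ (x : ℂ)).re := by
  rw [cpow_def_of_ne_zero (slitPlane_ne_zero hz), exp_re]
  refine mul_pos (Real.exp_pos _) (Real.cos_pos_of_mem_Ioo ?_)
  have him : (log z * x).im = z.arg * x := by simp [log_im]
  have harg : |z.arg| < Real.pi :=
    abs_lt.2 ⟨neg_pi_lt_arg z, (arg_le_pi z).lt_of_ne (slitPlane_arg_ne_pi hz)⟩
  have : |z.arg * x| < Real.pi / 2 := by
    rw [abs_mul]
    nlinarith [abs_nonneg z.arg, abs_nonneg x, Real.pi_pos]
  rw [him]
  exact ⟨by linarith [neg_abs_le (z.arg * x)], by linarith [le_abs_self (z.arg * x)]⟩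

end Complex

lemma Asymptotics.IsBigO.cpow_ofReal {α E : Type*} [SeminormedAddCommGroup E] {l : Filter α}
    {f : α → ℂ} {g : α → E} (h : f =O[l] g) {x : ℝ} (hx : 0 ≤ x) :
    (fun a => f a ^ (x : ℂ)) =O[l] fun a => ‖g a‖ ^ x := by
  refine isBigO_norm_left.1 ?_
  simp only [norm_cpow_real]
  exact h.norm_norm.rpow hx (Eventually.of_forall fun _ => norm_nonneg _)

lemma isBigO_sub_norm_rpow {E : Type*} [SeminormedAddCommGroup E] (x₀ : E) {p : ℝ} (hp : p ≤ 1) :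
    (fun x => x - x₀) =O[𝓝 x₀] fun x => ‖x - x₀‖ ^ p :=
  .of_norm_left <| (IsBigO.id_rpow_of_le_one hp).comp_tendsto (tendsto_norm_sub_self_nhdsGE x₀)

section

variable {c : ℝ} {k : ℂ}

lemma sub_div_add_mem_slitPlane (hc : 0 ≤ c) (hk : ¬(k.re = 0 ∧ |k.im| ≤ c)) :
    (k - I * c) / (k + I * c) ∈ slitPlane := by
  rw [mem_slitPlane_iff_not_le_zero, Complex.le_def]
  rintro ⟨hre, him⟩
  apply hk
  by_cases hk₀ : k + I * c = 0
  · have hk' : k = -(I * c) := eq_neg_of_add_eq_zero_left hk₀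
    simp [hk', abs_of_nonneg hc]
  set r := ((k - I * c) / (k + I * c)).re
  have hr : (k - I * c) / (k + I * c) = r := ext rfl (by simpa using him)
  have hkr : k * (1 - r) = I * c * (1 + r) := by
    rw [div_eq_iff hk₀] at hr
    linear_combination hr
  have hre' := congrArg re hkr
  have him' := congrArg im hkr
  simp only [mul_re, mul_im, sub_re, sub_im, add_re, add_im, one_re, one_im, ofReal_re,
    ofReal_im, I_re, I_im] at hre' him'
  have hr₀ : r ≤ 0 := hre
  refine ⟨by nlinarith, abs_le.2 ⟨by nlinarith, by nlinarith⟩⟩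

lemma re_aTilde_pos (hc : 0 ≤ c) (hk : ¬(k.re = 0 ∧ |k.im| ≤ c)) : 0 < (aTilde c k).re := by
  have hw := sub_div_add_mem_slitPlane hc hk
  set u := ((k - I * c) / (k + I * c)) ^ ((1 : ℂ) / 4)
  have hu : 0 < u.re := by
    have := re_cpow_pos hw (x := 1 / 4) (by norm_num [abs_of_pos])
    rwa [show ((1 / 4 : ℝ) : ℂ) = 1 / 4 by norm_num] at this
  have hu₀ : 0 < normSq u := normSq_pos.2 fun h => by simp [h] at hu
  have haTilde : aTilde c k = ((1 / 2 : ℝ) : ℂ) * (u + u⁻¹) := by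
    rw [aTilde, ← inv_div (k - I * c), inv_cpow _ _ (slitPlane_arg_ne_pi hw)]
    push_cast
    ring
  rw [haTilde, re_ofReal_mul, add_re, inv_re]
  positivity

lemma sub_div_two_mul_I_mem_slitPlane (hk : ¬(k.re = 0 ∧ |k.im| ≤ c))
    (hk' : ‖k - I * c‖ < 2 * c) : (k - I * c) / (2 * I * c) ∈ slitPlane := by
  rw [mem_slitPlane_iff_not_le_zero, Complex.le_def]
  rintro ⟨hre, him⟩
  apply hk
  have hc : 0 < c := by linarith [norm_nonneg (k - I * c)]
  set r := ((k - I * c) / (2 * I * c)).re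
  have hr : (k - I * c) / (2 * I * c) = r := ext rfl (by simpa using him)
  have hkr : k - I * c = 2 * I * c * r := by
    rw [div_eq_iff (by simp [hc.ne'])] at hr
    linear_combination hr
  have hre' := congrArg re hkr
  have him' := congrArg im hkr
  simp only [mul_re, mul_im, sub_re, sub_im, ofReal_re, ofReal_im, I_re, I_im, re_ofNat,
    im_ofNat] at hre' him'
  have hr₀ : r ≤ 0 := hre
  have hnorm := (abs_im_le_norm (k - I * c)).trans_lt hk'
  simp only [sub_im, mul_im, ofReal_re, ofReal_im, I_re, I_im] at hnorm
  refine ⟨by linarith, abs_le.2 ⟨?_, by nlinarith⟩⟩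
  rw [abs_lt] at hnorm
  nlinarith

lemma two_mul_aTilde_mul_cpow_eq (hv : (k - I * c) / (2 * I * c) ∈ slitPlane) :
    2 * aTilde c k * ((k - I * c) / (2 * I * c)) ^ ((1 : ℂ) / 4) =
      ((k - I * c) / (k + I * c)) ^ ((1 : ℂ) / 4) * ((k - I * c) / (2 * I * c)) ^ ((1 : ℂ) / 4)
        + ((k + I * c) / (2 * I * c)) ^ ((1 : ℂ) / 4) := by
  set v := (k - I * c) / (2 * I * c)
  obtain ⟨hk, h2Ic⟩ := div_ne_zero_iff.1 (slitPlane_ne_zero hv)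
  have h₁ : (k + I * c) / (k - I * c) = 1 + v⁻¹ := by
    rw [inv_div]
    field_simp
    ring
  have h₂ : (k + I * c) / (2 * I * c) = 1 + v := by
    rw [eq_comm, ← div_self h2Ic, ← add_div]
    ring
  rw [aTilde, h₁, h₂, ← one_add_inv_cpow_mul_cpow hv]
  ring

lemma isBigO_aTilde_expansion (hc : c ≠ 0) :
    (fun k : ℂ => ((k - I * c) / (k + I * c)) ^ ((1 : ℂ) / 4)
        * ((k - I * c) / (2 * I * c)) ^ ((1 : ℂ) / 4)
        + (((k + I * c) / (2 * I * c)) ^ ((1 : ℂ) / 4) - 1))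
      =O[𝓝 (I * c)] fun k => ‖k - I * c‖ ^ ((1 : ℝ) / 2) := by
  have h2Ic : 2 * I * c ≠ 0 := by simp [hc]
  have hw : (fun k : ℂ => (k - I * c) / (k + I * c)) =O[𝓝 (I * c)] fun k => k - I * c := by
    have : Tendsto (fun k : ℂ => (k + I * c)⁻¹) (𝓝 (I * c)) (𝓝 (I * c + I * c)⁻¹) :=
      (tendsto_id.add_const _).inv₀ (by simp [hc])
    simpa [div_eq_mul_inv] using (isBigO_refl (fun k => k - I * c) _).mul (this.isBigO_one ℂ)
  have hv : (fun k : ℂ => (k - I * c) / (2 * I * c)) =O[𝓝 (I * c)] fun k => k - I * c := by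
    simpa [div_eq_inv_mul] using isBigO_const_mul_self (2 * I * c)⁻¹ (fun k => k - I * c) _
  have hsing : (fun k : ℂ => ((k - I * c) / (k + I * c)) ^ ((1 : ℂ) / 4)
      * ((k - I * c) / (2 * I * c)) ^ ((1 : ℂ) / 4))
      =O[𝓝 (I * c)] fun k => ‖k - I * c‖ ^ ((1 : ℝ) / 2) := by
    rw [show ((1 : ℂ) / 4) = ((1 / 4 : ℝ) : ℂ) by norm_num]
    refine ((hw.cpow_ofReal (by norm_num)).mul (hv.cpow_ofReal (by norm_num))).congr_right
      fun k => ?_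
    rw [← Real.rpow_add' (norm_nonneg _) (by norm_num)]
    norm_num
  have hreg : (fun k : ℂ => ((k + I * c) / (2 * I * c)) ^ ((1 : ℂ) / 4) - 1)
      =O[𝓝 (I * c)] fun k => k - I * c := by
    have h₁ : (I * c + I * c) / (2 * I * c) = 1 := by
      rw [← two_mul, ← mul_assoc, div_self h2Ic]
    have hd : DifferentiableAt ℂ (fun k : ℂ => ((k + I * c) / (2 * I * c)) ^ ((1 : ℂ) / 4))
        (I * c) :=
      ((differentiableAt_id.add_const _).div_const _).cpow_const (by simp [h₁])
    simpa [h₁] using hd.isBigO_sub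
  exact hsing.add (hreg.trans (isBigO_sub_norm_rpow _ (by norm_num)))

end

/-- `ã(k) ≠ 0` in the upper half-plane off the cut, and near `k = ic` one has
`ã(k) = (1/2)(2ic/(k-ic))^{1/4}(1 + O(√(k-ic)))`; in particular the constant `h*` in
`a(k) = (h*/2)(2ic/(k-ic))^{1/4}(1 + O(√((k-ic)/i)))` equals `1` for the pure step. -/
theorem aTilde_nonvanishing_and_singularity (c : ℝ) (hc : 0 < c) :
    (∀ k : ℂ, 0 < k.im → ¬(k.re = 0 ∧ k.im ≤ c) → aTilde c k ≠ 0) ∧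
    (fun k : ℂ =>
        2 * aTilde c k * ((k - Complex.I * c) / (2 * Complex.I * c)) ^ ((1 : ℂ) / 4) - 1)
      =O[nhdsWithin (Complex.I * c) {k : ℂ | ¬(k.re = 0 ∧ |k.im| ≤ c)}]
        fun k : ℂ => ‖k - Complex.I * c‖ ^ ((1 : ℝ) / 2) := by
  constructor
  · intro k hk hcut h
    have hk' : ¬(k.re = 0 ∧ |k.im| ≤ c) := by rwa [abs_of_pos hk]
    exact (re_aTilde_pos hc.le hk').ne' (by simp [h])
  · have hv : ∀ᶠ k in 𝓝[{k : ℂ | ¬(k.re = 0 ∧ |k.im| ≤ c)}] (I * c),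
        (k - I * c) / (2 * I * c) ∈ slitPlane := by
      filter_upwards [self_mem_nhdsWithin,
        nhdsWithin_le_nhds (Metric.ball_mem_nhds (I * c) (by linarith : (0 : ℝ) < 2 * c))]
        with k hk hk'
      exact sub_div_two_mul_I_mem_slitPlane hk (by rwa [Metric.mem_ball, dist_eq] at hk')
    refine ((isBigO_aTilde_expansion hc.ne').mono nhdsWithin_le_nhds).congr' ?_ .rfl
    filter_upwards [hv] with k hk
    rw [two_mul_aTilde_mul_cpow_eq hk]
    ring
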